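/- Let $U : \overline{\mathbb{R}^{m+1}_+} \times [0,\infty) \to \mathbb{R}^{\ell}$ be a bounded smooth solution of the heat equation $\partial_t U = \Delta U$ in $\mathbb{R}^{m+1}_+ \times (0,\infty)$ with Neumann boundary condition $\lim_{y\to 0^+} \partial_y U(x,y,t) = -\frac{c}{\varepsilon^2}(1-|U(x,0,t)|^2)U(x,0,t)$ on $\mathbb{R}^m \times (0,\infty)$ (with $c, \varepsilon > 0$) and initial condition with $|U(\cdot, 0)| \le 1$. Then $|U| \le 1$ everywhere in $\mathbb{R}^{m+1}_+ \times (0,\infty)$. -/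

import Mathlib

noncomputable section
set_option maxHeartbeats 4000000
open scoped RealInnerProductSpace


/-- Directional derivative of a map on `ℝ^m × ℝ × ℝ` (points `(x, y, t)`). -/
def pd {m : ℕ} {F : Type*} [NormedAddCommGroup F] [NormedSpace ℝ F]
    (v : (Fin m → ℝ) × ℝ × ℝ) (f : ((Fin m → ℝ) × ℝ × ℝ) → F)
    (p : (Fin m → ℝ) × ℝ × ℝ) : F :=
  fderiv ℝ f p v

/-- Laplacian in the space variables `X = (x, y) ∈ ℝ^m × (0,∞)`. -/
def lap {m : ℕ} {F : Type*} [NormedAddCommGroup F] [NormedSpace ℝ F]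
    (f : ((Fin m → ℝ) × ℝ × ℝ) → F) (p : (Fin m → ℝ) × ℝ × ℝ) : F :=
  (∑ i : Fin m, pd (Pi.single i 1, 0, 0) (pd (Pi.single i 1, 0, 0) f) p) +
    pd (0, 1, 0) (pd (0, 1, 0) f) p

variable {m : ℕ} {F : Type*} [NormedAddCommGroup F] [NormedSpace ℝ F]

theorem contDiff_pd (v : (Fin m → ℝ) × ℝ × ℝ) {f : ((Fin m → ℝ) × ℝ × ℝ) → F}
    (hf : ContDiff ℝ (⊤ : ℕ∞) f) : ContDiff ℝ (⊤ : ℕ∞) (pd v f) :=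
  (ContinuousLinearMap.apply ℝ F v).contDiff.comp (hf.fderiv_right (by simp))

theorem pd_inner {ℓ : ℕ} {f g : ((Fin m → ℝ) × ℝ × ℝ) → EuclideanSpace ℝ (Fin ℓ)}
    (hf : ContDiff ℝ (⊤ : ℕ∞) f) (hg : ContDiff ℝ (⊤ : ℕ∞) g) (v p) :
    pd v (fun q => ⟪f q, g q⟫) p = ⟪f p, pd v g p⟫ + ⟪pd v f p, g p⟫ := by
  exact fderiv_inner_apply (𝕜 := ℝ) (hf.differentiable (by simp) p) (hg.differentiable (by simp) p) v

theorem pd_add {f g : ((Fin m → ℝ) × ℝ × ℝ) → F}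
    (hf : ContDiff ℝ (⊤ : ℕ∞) f) (hg : ContDiff ℝ (⊤ : ℕ∞) g) (v p) :
    pd v (fun q => f q + g q) p = pd v f p + pd v g p := by
  unfold pd
  rw [fderiv_fun_add (hf.differentiable (by simp) p) (hg.differentiable (by simp) p)]
  rfl

theorem pd_eq_deriv {f : ((Fin m → ℝ) × ℝ × ℝ) → F} {p} (hf : DifferentiableAt ℝ f p) (v) :
    pd v f p = deriv (fun s : ℝ => f (p + s • v)) 0 := by
  have h : HasDerivAt (fun s : ℝ => f (p + s • v)) (fderiv ℝ f p v) 0 := by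
    have hl : HasDerivAt (fun s : ℝ => p + s • v) v 0 := by
      simpa using ((hasDerivAt_id (0:ℝ)).smul_const v).const_add p
    have h2 : HasDerivAt (f ∘ fun s : ℝ => p + s • v) (fderiv ℝ f p v) 0 := by
      refine HasFDerivAt.comp_hasDerivAt _ ?_ hl
      simpa using hf.hasFDerivAt
    simpa [Function.comp_def] using h2
  exact h.deriv.symm

theorem second_deriv_test {h k : ℝ → ℝ} (hmax : IsLocalMax h 0)
    (hk : ∀ s, HasDerivAt h (k s) s) {a : ℝ} (hka : HasDerivAt k a 0) : a ≤ 0 := by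
  by_contra hpos
  push_neg at hpos
  have hk0 : k 0 = 0 := hmax.hasDerivAt_eq_zero (hk 0)
  have hslope : Filter.Tendsto (slope k 0) (nhdsWithin 0 {(0:ℝ)}ᶜ) (nhds a) :=
    hasDerivAt_iff_tendsto_slope.1 hka
  have hev : ∀ᶠ s in nhdsWithin 0 {(0:ℝ)}ᶜ, 0 < slope k 0 s :=
    hslope.eventually (eventually_gt_nhds hpos)
  have hev2 : ∀ᶠ s in nhdsWithin (0:ℝ) (Set.Ioi 0), 0 < slope k 0 s ∧ h s ≤ h 0 := by
    refine Filter.Eventually.and ?_ ?_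
    · exact hev.filter_mono (nhdsWithin_mono _ (fun s hs => by
        simp only [Set.mem_compl_iff, Set.mem_singleton_iff]
        exact ne_of_gt hs))
    · exact hmax.filter_mono nhdsWithin_le_nhds
  obtain ⟨η, hη, hsub⟩ := mem_nhdsGT_iff_exists_Ioc_subset.1 hev2
  have hηpos : (0:ℝ) < η := hη
  have hkpos : ∀ s ∈ Set.Ioc (0:ℝ) η, 0 < k s := by
    intro s hs
    have := (hsub hs).1
    rw [slope_def_field] at this
    have h2 : (k s - k 0) / (s - 0) > 0 := by
      simpa [div_eq_inv_mul] using this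
    rw [hk0, sub_zero, sub_zero] at h2
    exact (div_pos_iff.1 h2).resolve_right (fun ⟨_, hs0⟩ => absurd hs.1 (not_lt.2 hs0.le)) |>.1
  have hmono : StrictMonoOn h (Set.Icc 0 η) := by
    refine strictMonoOn_of_deriv_pos (convex_Icc 0 η) ?_ ?_
    · exact fun s _ => ((hk s).differentiableAt.continuousAt).continuousWithinAt
    · intro s hs
      rw [interior_Icc] at hs
      rw [(hk s).deriv]
      exact hkpos s ⟨hs.1, hs.2.le⟩
  have h1 : h 0 < h η := hmono ⟨le_refl 0, hηpos.le⟩ ⟨hηpos.le, le_refl η⟩ hηpos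
  exact absurd (hsub ⟨hηpos, le_refl η⟩).2 (not_le.2 h1)

theorem hasDerivAt_line {f : ((Fin m → ℝ) × ℝ × ℝ) → F} (hf : Differentiable ℝ f)
    (p v : (Fin m → ℝ) × ℝ × ℝ) (s : ℝ) :
    HasDerivAt (fun r : ℝ => f (p + r • v)) (pd v f (p + s • v)) s := by
  have hl : HasDerivAt (fun r : ℝ => p + r • v) v s := by
    simpa using ((hasDerivAt_id s).smul_const v).const_add p
  have h2 : HasDerivAt (f ∘ fun r : ℝ => p + r • v) (fderiv ℝ f (p + s • v) v) s := by
    refine HasFDerivAt.comp_hasDerivAt _ ?_ hl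
    exact (hf (p + s • v)).hasFDerivAt
  simpa [Function.comp_def, pd] using h2

section GG
variable {ℓ : ℕ} {U : ((Fin m → ℝ) × ℝ × ℝ) → EuclideanSpace ℝ (Fin ℓ)}

theorem contDiff_gg (hU : ContDiff ℝ (⊤ : ℕ∞) U) : ContDiff ℝ (⊤ : ℕ∞) (fun q => ⟪U q, U q⟫) :=
  hU.inner ℝ hU

theorem pd_gg (hU : ContDiff ℝ (⊤ : ℕ∞) U) (v p) :
    pd v (fun q => ⟪U q, U q⟫) p = 2 * ⟪U p, pd v U p⟫ := by
  rw [pd_inner hU hU, real_inner_comm (pd v U p) (U p)]; ring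

theorem pdpd_gg (hU : ContDiff ℝ (⊤ : ℕ∞) U) (v p) :
    pd v (pd v (fun q => ⟪U q, U q⟫)) p
      = 2 * ⟪pd v U p, pd v U p⟫ + 2 * ⟪U p, pd v (pd v U) p⟫ := by
  have h1 : pd v (fun q => ⟪U q, U q⟫) = fun q => ⟪U q, pd v U q⟫ + ⟪pd v U q, U q⟫ :=
    funext fun q => pd_inner hU hU v q
  rw [h1, pd_add (hU.inner ℝ (contDiff_pd v hU)) ((contDiff_pd v hU).inner ℝ hU),
    pd_inner hU (contDiff_pd v hU), pd_inner (contDiff_pd v hU) hU,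
    real_inner_comm (pd v (pd v U) p) (U p)]
  ring

theorem lap_gg (hU : ContDiff ℝ (⊤ : ℕ∞) U) (p) :
    lap (fun q => ⟪U q, U q⟫) p
      = 2 * ((∑ i : Fin m, ⟪pd (Pi.single i 1, 0, 0) U p, pd (Pi.single i 1, 0, 0) U p⟫)
          + ⟪pd ((0 : Fin m → ℝ), 1, 0) U p, pd ((0 : Fin m → ℝ), 1, 0) U p⟫)
        + 2 * ⟪U p, lap U p⟫ := by
  unfold lap
  rw [Finset.sum_congr rfl (fun i _ => pdpd_gg hU (Pi.single i 1, 0, 0) p),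
    pdpd_gg hU ((0 : Fin m → ℝ), 1, 0) p, inner_add_right, inner_sum,
    Finset.sum_add_distrib]
  rw [mul_add, mul_add, Finset.mul_sum, Finset.mul_sum]
  ring
end GG

def QQ (m : ℕ) : ((Fin m → ℝ) × ℝ × ℝ) → ℝ :=
  fun p => (∑ j, (p.1 j)^2) + (p.2.1^2 + (2*(m:ℝ)+3) * p.2.2)

theorem contDiff_QQ : ContDiff ℝ (⊤ : ℕ∞) (QQ m) := by
  apply ContDiff.add
  · refine ContDiff.sum fun j _ => ContDiff.pow ?_ 2
    exact (ContinuousLinearMap.proj j : (Fin m → ℝ) →L[ℝ] ℝ).contDiff.comp contDiff_fst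
  · exact ((contDiff_fst.comp contDiff_snd).pow 2).add
      (contDiff_const.mul (contDiff_snd.comp contDiff_snd))

theorem pd_QQ (v p) :
    pd v (QQ m) p = (∑ j, 2 * p.1 j * v.1 j) + (2 * p.2.1 * v.2.1 + (2*(m:ℝ)+3) * v.2.2) := by
  have h1 := hasDerivAt_line (contDiff_QQ.differentiable (by simp)) p v 0
  rw [zero_smul, add_zero] at h1
  have h2 : HasDerivAt (fun s : ℝ => QQ m (p + s • v))
      ((∑ j, 2 * p.1 j * v.1 j) + (2 * p.2.1 * v.2.1 + (2*(m:ℝ)+3) * v.2.2)) 0 := by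
    have he : (fun s : ℝ => QQ m (p + s • v))
        = fun s => (∑ j, (p.1 j + s * v.1 j)^2)
            + ((p.2.1 + s * v.2.1)^2 + (2*(m:ℝ)+3) * (p.2.2 + s * v.2.2)) := by
      funext s
      simp [QQ, Prod.fst_add, Prod.snd_add, smul_eq_mul, mul_comm]
    rw [he]
    have hj : ∀ j : Fin m, HasDerivAt (fun s : ℝ => (p.1 j + s * v.1 j)^2)
        (2 * p.1 j * v.1 j) 0 := by
      intro j
      have h := (((hasDerivAt_id (0:ℝ)).const_mul (v.1 j)).const_add (p.1 j)).fun_pow 2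
      norm_num at h
      simpa [mul_comm, mul_assoc, mul_left_comm] using h
    have hy : HasDerivAt (fun s : ℝ => (p.2.1 + s * v.2.1)^2) (2 * p.2.1 * v.2.1) 0 := by
      have h := (((hasDerivAt_id (0:ℝ)).const_mul v.2.1).const_add p.2.1).fun_pow 2
      norm_num at h
      simpa [mul_comm, mul_assoc, mul_left_comm] using h
    have ht : HasDerivAt (fun s : ℝ => (2*(m:ℝ)+3) * (p.2.2 + s * v.2.2))
        ((2*(m:ℝ)+3) * v.2.2) 0 := by
      have h := (((hasDerivAt_id (0:ℝ)).const_mul v.2.2).const_add p.2.2).const_mul (2*(m:ℝ)+3)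
      simpa [mul_comm] using h
    exact (HasDerivAt.fun_sum (fun j _ => hj j)).fun_add (hy.fun_add ht)
  exact (h2.unique h1).symm

theorem pdpd_QQ (v p) :
    pd v (pd v (QQ m)) p = (∑ j, 2 * v.1 j * v.1 j) + 2 * v.2.1 * v.2.1 := by
  have h1 : pd v (QQ m) = fun q : (Fin m → ℝ) × ℝ × ℝ =>
      (∑ j, 2 * q.1 j * v.1 j) + (2 * q.2.1 * v.2.1 + (2*(m:ℝ)+3) * v.2.2) :=
    funext (pd_QQ v)
  have hA : ContDiff ℝ (⊤ : ℕ∞) (fun q : (Fin m → ℝ) × ℝ × ℝ =>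
      (∑ j, 2 * q.1 j * v.1 j) + (2 * q.2.1 * v.2.1 + (2*(m:ℝ)+3) * v.2.2)) :=
    h1 ▸ contDiff_pd v contDiff_QQ
  rw [h1]
  have hline := hasDerivAt_line (hA.differentiable (by simp)) p v 0
  rw [zero_smul, add_zero] at hline
  have h2 : HasDerivAt (fun s : ℝ => (∑ j, 2 * (p + s • v).1 j * v.1 j)
      + (2 * (p + s • v).2.1 * v.2.1 + (2*(m:ℝ)+3) * v.2.2))
      ((∑ j, 2 * v.1 j * v.1 j) + 2 * v.2.1 * v.2.1) 0 := by
    have he : (fun s : ℝ => (∑ j, 2 * (p + s • v).1 j * v.1 j)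
        + (2 * (p + s • v).2.1 * v.2.1 + (2*(m:ℝ)+3) * v.2.2))
        = fun s => (∑ j, 2 * (p.1 j + s * v.1 j) * v.1 j)
            + (2 * (p.2.1 + s * v.2.1) * v.2.1 + (2*(m:ℝ)+3) * v.2.2) := by
      funext s
      simp [Prod.fst_add, Prod.snd_add, smul_eq_mul]
    rw [he]
    have hj : ∀ j : Fin m, HasDerivAt (fun s : ℝ => 2 * (p.1 j + s * v.1 j) * v.1 j)
        (2 * v.1 j * v.1 j) 0 := by
      intro j
      have h := ((((hasDerivAt_id (0:ℝ)).const_mul (v.1 j)).const_add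
        (p.1 j)).const_mul 2).mul_const (v.1 j)
      simpa [mul_comm, mul_assoc, mul_left_comm] using h
    have hy : HasDerivAt (fun s : ℝ => 2 * (p.2.1 + s * v.2.1) * v.2.1 + (2*(m:ℝ)+3) * v.2.2)
        (2 * v.2.1 * v.2.1) 0 := by
      have h := ((((hasDerivAt_id (0:ℝ)).const_mul v.2.1).const_add
        p.2.1).const_mul 2).mul_const v.2.1
      have h2 := h.add_const ((2*(m:ℝ)+3) * v.2.2)
      simpa [mul_comm, mul_assoc, mul_left_comm] using h2
    exact (HasDerivAt.fun_sum (fun j _ => hj j)).fun_add hy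
  exact (h2.unique hline).symm

theorem lap_QQ (p) : lap (QQ m) p = 2*(m:ℝ) + 2 := by
  unfold lap
  rw [Finset.sum_congr rfl (fun i _ => pdpd_QQ (Pi.single i 1, 0, 0) p),
    pdpd_QQ ((0 : Fin m → ℝ), 1, 0) p]
  simp [Pi.single_apply]
  ring

theorem pd_QQ_t (p) : pd ((0 : Fin m → ℝ), 0, 1) (QQ m) p = 2*(m:ℝ)+3 := by
  rw [pd_QQ]; simp

theorem pd_QQ_y (p) : pd ((0 : Fin m → ℝ), 1, 0) (QQ m) p = 2 * p.2.1 := by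
  rw [pd_QQ]; simp

theorem pd_sub {f g : ((Fin m → ℝ) × ℝ × ℝ) → F}
    (hf : ContDiff ℝ (⊤ : ℕ∞) f) (hg : ContDiff ℝ (⊤ : ℕ∞) g) (v p) :
    pd v (fun q => f q - g q) p = pd v f p - pd v g p := by
  unfold pd
  rw [fderiv_fun_sub (hf.differentiable (by simp) p) (hg.differentiable (by simp) p)]
  rfl

theorem pd_const_mul {f : ((Fin m → ℝ) × ℝ × ℝ) → ℝ} (hf : ContDiff ℝ (⊤ : ℕ∞) f) (a : ℝ) (v p) :
    pd v (fun q => a * f q) p = a * pd v f p := by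
  unfold pd
  rw [fderiv_const_mul (hf.differentiable (by simp) p) a]
  rfl

section PHI
variable {ℓ : ℕ} {U : ((Fin m → ℝ) × ℝ × ℝ) → EuclideanSpace ℝ (Fin ℓ)}

theorem contDiff_phi (hU : ContDiff ℝ (⊤ : ℕ∞) U) (δ : ℝ) :
    ContDiff ℝ (⊤ : ℕ∞) (fun q => ⟪U q, U q⟫ - δ * QQ m q) :=
  (contDiff_gg hU).sub (contDiff_const.mul contDiff_QQ)

theorem pd_phi (hU : ContDiff ℝ (⊤ : ℕ∞) U) (δ : ℝ) (v p) :
    pd v (fun q => ⟪U q, U q⟫ - δ * QQ m q) p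
      = pd v (fun q => ⟪U q, U q⟫) p - δ * pd v (QQ m) p := by
  rw [pd_sub (contDiff_gg hU) (contDiff_const.mul contDiff_QQ),
    pd_const_mul contDiff_QQ δ]

theorem pdpd_phi (hU : ContDiff ℝ (⊤ : ℕ∞) U) (δ : ℝ) (v p) :
    pd v (pd v (fun q => ⟪U q, U q⟫ - δ * QQ m q)) p
      = pd v (pd v (fun q => ⟪U q, U q⟫)) p - δ * pd v (pd v (QQ m)) p := by
  have h1 : pd v (fun q => ⟪U q, U q⟫ - δ * QQ m q)
      = fun q => pd v (fun r => ⟪U r, U r⟫) q - δ * pd v (QQ m) q :=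
    funext (pd_phi hU δ v)
  rw [h1, pd_sub (contDiff_pd v (contDiff_gg hU))
      (contDiff_const.mul (contDiff_pd v contDiff_QQ)),
    pd_const_mul (contDiff_pd v contDiff_QQ) δ]

theorem lap_phi (hU : ContDiff ℝ (⊤ : ℕ∞) U) (δ : ℝ) (p) :
    lap (fun q => ⟪U q, U q⟫ - δ * QQ m q) p
      = lap (fun q => ⟪U q, U q⟫) p - δ * lap (QQ m) p := by
  unfold lap
  rw [Finset.sum_congr rfl (fun i _ => pdpd_phi hU δ (Pi.single i 1, 0, 0) p),
    pdpd_phi hU δ ((0 : Fin m → ℝ), 1, 0) p, Finset.sum_sub_distrib]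
  rw [mul_add, Finset.mul_sum]
  ring
end PHI


/-- if `U` is a bounded smooth solution of the heat equation in
`ℝ^{m+1}_+ × (0,∞)` with Neumann boundary condition
`lim_{y→0⁺} ∂_y U = -(c/ε²)(1-|U(x,0,t)|²) U(x,0,t)` and `|U(·,0)| ≤ 1` initially,
then `|U| ≤ 1` everywhere in `ℝ^{m+1}_+ × (0,∞)`. -/
theorem stmt6 {m ℓ : ℕ} (c ε : ℝ) (hc : 0 < c) (hε : 0 < ε)
    (U : ((Fin m → ℝ) × ℝ × ℝ) → EuclideanSpace ℝ (Fin ℓ))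
    (hsmooth : ContDiff ℝ (⊤ : ℕ∞) U)
    (hbdd : ∃ C, ∀ p, ‖U p‖ ≤ C)
    (hheat : ∀ (x : Fin m → ℝ) (y t : ℝ), 0 < y → 0 < t →
      pd (0, 0, 1) U (x, y, t) = lap U (x, y, t))
    (hbc : ∀ (x : Fin m → ℝ) (t : ℝ), 0 < t →
      Filter.Tendsto (fun y => pd (0, 1, 0) U (x, y, t))
        (nhdsWithin 0 (Set.Ioi 0))
        (nhds ((-(c / ε ^ 2) * (1 - ‖U (x, 0, t)‖ ^ 2)) • U (x, 0, t))))
    (hinit : ∀ (x : Fin m → ℝ) (y : ℝ), 0 ≤ y → ‖U (x, y, 0)‖ ≤ 1) :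
    ∀ (x : Fin m → ℝ) (y t : ℝ), 0 < y → 0 < t → ‖U (x, y, t)‖ ≤ 1 := by
  obtain ⟨C, hC⟩ := hbdd
  have hC0 : 0 ≤ C := le_trans (norm_nonneg _) (hC 0)
  have hgnorm : ∀ p, ⟪U p, U p⟫ = ‖U p‖^2 := fun p => real_inner_self_eq_norm_sq (U p)
  have hgnonneg : ∀ p, (0:ℝ) ≤ ⟪U p, U p⟫ := fun p => real_inner_self_nonneg
  have hgC : ∀ p, ⟪U p, U p⟫ ≤ C^2 := fun p => by
    rw [hgnorm]; exact pow_le_pow_left₀ (norm_nonneg _) (hC p) 2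
  have hQnonneg : ∀ q : (Fin m → ℝ) × ℝ × ℝ, 0 ≤ q.2.2 → 0 ≤ QQ m q := by
    intro q hq
    have h1 : (0:ℝ) ≤ ∑ j, (q.1 j)^2 := Finset.sum_nonneg fun j _ => sq_nonneg _
    have h2 : (0:ℝ) ≤ (2*(m:ℝ)+3) := by positivity
    have := sq_nonneg q.2.1
    simp only [QQ]
    nlinarith
  intro x y t hy ht
  have hkey : ∀ δ : ℝ, 0 < δ → ⟪U (x,y,t), U (x,y,t)⟫ ≤ 1 + δ * QQ m (x,y,t) := by
    intro δ hδ
    set p0 : (Fin m → ℝ) × ℝ × ℝ := (x, y, t) with hp0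
    set B0 : ℝ := (∑ j, (x j)^2) + y^2 with hB0def
    have hB0 : 0 ≤ B0 := by
      have : (0:ℝ) ≤ ∑ j, (x j)^2 := Finset.sum_nonneg fun j _ => sq_nonneg _
      nlinarith [sq_nonneg y]
    set R2 : ℝ := C^2/δ + B0 + 1 with hR2def
    have hR2nn : 0 ≤ R2 := by positivity
    set φ : ((Fin m → ℝ) × ℝ × ℝ) → ℝ := fun q => ⟪U q, U q⟫ - δ * QQ m q with hφdef
    have hφsmooth : ContDiff ℝ (⊤ : ℕ∞) φ := contDiff_phi hsmooth δ
    have hφdiff : Differentiable ℝ φ := hφsmooth.differentiable (by simp)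
    set S : Set ((Fin m → ℝ) × ℝ × ℝ) :=
      {q | 0 ≤ q.2.1 ∧ 0 ≤ q.2.2 ∧ q.2.2 ≤ t ∧ (∑ j, (q.1 j)^2) + q.2.1^2 ≤ R2} with hSdef
    have hp0S : p0 ∈ S := by
      refine ⟨hy.le, ht.le, le_refl t, ?_⟩
      have h1 : (0:ℝ) ≤ C^2/δ := by positivity
      show (∑ j, (x j)^2) + y^2 ≤ R2
      have hB0eq : B0 = (∑ j, (x j)^2) + y^2 := hB0def
      rw [hR2def]
      linarith
    have hScompact : IsCompact S := by
      have hK : IsCompact ((Metric.closedBall (0 : Fin m → ℝ) (Real.sqrt R2)) ×ˢ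
          ((Set.Icc (-(Real.sqrt R2)) (Real.sqrt R2)) ×ˢ (Set.Icc (0:ℝ) t))) :=
        (isCompact_closedBall _ _).prod (isCompact_Icc.prod isCompact_Icc)
      have hclosed : IsClosed S := by
        have hrep : S = ((fun q : (Fin m → ℝ) × ℝ × ℝ => q.2.1) ⁻¹' Set.Ici 0)
            ∩ (((fun q : (Fin m → ℝ) × ℝ × ℝ => q.2.2) ⁻¹' Set.Icc 0 t)
            ∩ ((fun q : (Fin m → ℝ) × ℝ × ℝ => (∑ j, (q.1 j)^2) + q.2.1^2) ⁻¹' Set.Iic R2)) := by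
          ext q
          simp only [hSdef, Set.mem_setOf_eq, Set.mem_inter_iff, Set.mem_preimage,
            Set.mem_Ici, Set.mem_Icc, Set.mem_Iic]
          tauto
        rw [hrep]
        refine IsClosed.inter (isClosed_Ici.preimage (continuous_fst.comp continuous_snd))
          (IsClosed.inter (isClosed_Icc.preimage (continuous_snd.comp continuous_snd)) ?_)
        refine isClosed_Iic.preimage (Continuous.add ?_ ((continuous_fst.comp continuous_snd).pow 2))
        exact continuous_finset_sum _ fun j _ => ((continuous_apply j).comp continuous_fst).pow 2
      refine hK.of_isClosed_subset hclosed ?_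
      rintro ⟨qx, qy, qt⟩ ⟨h1, h2, h3, h4⟩
      dsimp only at h1 h2 h3 h4
      have hsumnn : (0:ℝ) ≤ ∑ j, (qx j)^2 := Finset.sum_nonneg fun j _ => sq_nonneg _
      refine ⟨?_, ?_, h2, h3⟩
      · rw [Metric.mem_closedBall, dist_zero_right]
        refine (pi_norm_le_iff_of_nonneg (Real.sqrt_nonneg _)).2 fun j => ?_
        rw [Real.norm_eq_abs, ← Real.sqrt_sq_eq_abs]
        apply Real.sqrt_le_sqrt
        have := Finset.single_le_sum (f := fun j => (qx j)^2) (fun j _ => sq_nonneg _)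
          (Finset.mem_univ j)
        have h5 : (qx j)^2 ≤ ∑ i, (qx i)^2 := by simpa using this
        show (qx j)^2 ≤ R2
        nlinarith [sq_nonneg qy]
      · rw [Set.mem_Icc, ← abs_le, ← Real.sqrt_sq_eq_abs]
        apply Real.sqrt_le_sqrt
        nlinarith
    obtain ⟨q, hqS, hqmax⟩ :=
      hScompact.exists_isMaxOn ⟨p0, hp0S⟩ (hφsmooth.continuous.continuousOn)
    have hmax : ∀ p ∈ S, φ p ≤ φ q := fun p hp => isMaxOn_iff.1 hqmax p hp
    have hloc : IsLocalMaxOn φ S q :=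
      eventually_mem_nhdsWithin.mono (fun p hp => hmax p hp)
    have hφq : φ q ≤ 1 := by
      obtain ⟨hqy, hqt0, hqtt, hqball⟩ := hqS
      have hφqval : φ q = ⟪U q, U q⟫ - δ * QQ m q := rfl
      by_cases hball : (∑ j, (q.1 j)^2) + q.2.1^2 < R2
      swap
      · -- max on the lateral sphere
        have heq : (∑ j, (q.1 j)^2) + q.2.1^2 = R2 := le_antisymm hqball (not_lt.1 hball)
        have hQq : QQ m q = R2 + (2*(m:ℝ)+3) * q.2.2 := by
          simp only [QQ]; rw [← heq]; ring
        have hδR2 : δ * R2 = C^2 + δ*(B0+1) := by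
          rw [hR2def]; field_simp; ring
        have hKt : 0 ≤ δ * ((2*(m:ℝ)+3) * q.2.2) :=
          mul_nonneg hδ.le (mul_nonneg (by positivity) hqt0)
        have hgCq := hgC q
        rw [hφqval, hQq]
        nlinarith
      · by_cases hqt : q.2.2 = 0
        · -- max at initial time
          have hq0 : ((q.1, q.2.1, (0:ℝ)) : (Fin m → ℝ) × ℝ × ℝ) = q := by
            rw [← hqt]
          have hU1 : ‖U q‖ ≤ 1 := by rw [← hq0]; exact hinit q.1 q.2.1 hqy
          have hg1 : ⟪U q, U q⟫ ≤ 1 := by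
            rw [hgnorm]; nlinarith [norm_nonneg (U q)]
          have := hQnonneg q hqt0
          rw [hφqval]
          nlinarith
        · have hqtpos : 0 < q.2.2 := lt_of_le_of_ne hqt0 (Ne.symm hqt)
          by_cases hqy0 : q.2.1 = 0
          · -- max on the Neumann boundary
            have hBq : (0:ℝ) ≤ (∑ j, (q.1 j)^2) + q.2.1^2 := by
              have : (0:ℝ) ≤ ∑ j, (q.1 j)^2 := Finset.sum_nonneg fun j _ => sq_nonneg _
              nlinarith [sq_nonneg q.2.1]
            obtain ⟨η, hηpos, hη1, hη2⟩ :
                ∃ η : ℝ, 0 < η ∧ η ≤ 1 ∧ η ≤ R2 - ((∑ j, (q.1 j)^2) + q.2.1^2) :=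
              ⟨min 1 (R2 - ((∑ j, (q.1 j)^2) + q.2.1^2)),
                lt_min one_pos (by linarith), min_le_left _ _, min_le_right _ _⟩
            have hcomp : ∀ r : ℝ, q + r • (((0 : Fin m → ℝ), 1, 0) : (Fin m → ℝ) × ℝ × ℝ)
                = (q.1, q.2.1 + r, q.2.2) := by
              intro r
              simp [Prod.ext_iff]
            have hseg : segment ℝ q (q + η • (((0 : Fin m → ℝ), 1, 0) : (Fin m → ℝ) × ℝ × ℝ)) ⊆ S := by
              intro z hz
              rw [segment_eq_image'] at hz
              obtain ⟨a, ⟨ha0, ha1⟩, rfl⟩ := hz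
              show q + a • (q + η • (((0 : Fin m → ℝ), 1, 0) : (Fin m → ℝ) × ℝ × ℝ) - q) ∈ S
              rw [add_sub_cancel_left, smul_smul, hcomp]
              refine ⟨?_, hqt0, hqtt, ?_⟩
              · show 0 ≤ q.2.1 + a * η
                nlinarith
              · show (∑ j, (q.1 j)^2) + (q.2.1 + a * η)^2 ≤ R2
                rw [hqy0]
                have h2 : 0 ≤ a * η := mul_nonneg ha0 hηpos.le
                have h1 : a * η ≤ η := by
                  nlinarith [mul_nonneg hηpos.le (by linarith : (0:ℝ) ≤ 1 - a)]
                have h3 : a * η ≤ 1 := le_trans h1 hη1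
                have haη : (a * η)^2 ≤ η := by
                  nlinarith [mul_nonneg h2 (by linarith : (0:ℝ) ≤ 1 - a * η)]
                rw [hqy0] at hη2
                nlinarith
            have hcone := mem_posTangentConeAt_of_segment_subset hseg
            have hd := hloc.hasFDerivWithinAt_nonpos
              ((hφdiff q).hasFDerivAt.hasFDerivWithinAt) hcone
            rw [map_smul, smul_eq_mul] at hd
            have hdw : pd (((0 : Fin m → ℝ), 1, 0) : (Fin m → ℝ) × ℝ × ℝ) φ q ≤ 0 := by
              change η * pd (((0 : Fin m → ℝ), 1, 0) : (Fin m → ℝ) × ℝ × ℝ) φ q ≤ 0 at hd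
              nlinarith
            have hexp : pd (((0 : Fin m → ℝ), 1, 0) : (Fin m → ℝ) × ℝ × ℝ) φ q
                = 2 * ⟪U q, pd (((0 : Fin m → ℝ), 1, 0) : (Fin m → ℝ) × ℝ × ℝ) U q⟫
                  - δ * (2 * q.2.1) := by
              rw [hφdef, pd_phi hsmooth δ _ q, pd_gg hsmooth _ q, pd_QQ_y q]
            have hqrep : ((q.1, (0:ℝ), q.2.2) : (Fin m → ℝ) × ℝ × ℝ) = q := by
              rw [← hqy0]
            have hlim2 : Filter.Tendsto
                (fun yy => pd (((0 : Fin m → ℝ), 1, 0) : (Fin m → ℝ) × ℝ × ℝ) U (q.1, yy, q.2.2))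
                (nhdsWithin 0 (Set.Ioi 0))
                (nhds (pd (((0 : Fin m → ℝ), 1, 0) : (Fin m → ℝ) × ℝ × ℝ) U (q.1, 0, q.2.2))) := by
              have hcont : Continuous (fun yy : ℝ =>
                  pd (((0 : Fin m → ℝ), 1, 0) : (Fin m → ℝ) × ℝ × ℝ) U (q.1, yy, q.2.2)) :=
                (contDiff_pd _ hsmooth).continuous.comp (by continuity)
              exact (hcont.tendsto 0).mono_left nhdsWithin_le_nhds
            have hUw : pd (((0 : Fin m → ℝ), 1, 0) : (Fin m → ℝ) × ℝ × ℝ) U (q.1, 0, q.2.2)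
                = (-(c/ε^2) * (1 - ‖U (q.1, 0, q.2.2)‖^2)) • U (q.1, 0, q.2.2) :=
              tendsto_nhds_unique hlim2 (hbc q.1 q.2.2 hqtpos)
            rw [hqrep] at hUw
            have hcn : 0 < c/ε^2 := div_pos hc (pow_pos hε 2)
            obtain ⟨A, hA, hAdef⟩ : ∃ A : ℝ, 0 < A ∧ A = c/ε^2 := ⟨c/ε^2, hcn, rfl⟩
            have hg1 : ⟪U q, U q⟫ ≤ 1 := by
              rw [hexp, hUw, real_inner_smul_right, hqy0] at hdw
              rw [← hgnorm q, ← hAdef] at hdw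
              by_contra hgt
              push_neg at hgt
              have h1 : (0:ℝ) < ⟪U q, U q⟫ - 1 := by linarith
              nlinarith [mul_pos (mul_pos hA h1) (lt_trans one_pos hgt)]
            have := hQnonneg q hqt0
            rw [hφqval]
            nlinarith
          · -- interior maximum: contradiction with the heat equation
            exfalso
            have hqypos : 0 < q.2.1 := lt_of_le_of_ne hqy (Ne.symm hqy0)
            -- time derivative is nonnegative at the max
            have hcompt : ∀ r : ℝ, q + r • (((0 : Fin m → ℝ), 0, 1) : (Fin m → ℝ) × ℝ × ℝ)
                = (q.1, q.2.1, q.2.2 + r) := by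
              intro r; simp [Prod.ext_iff]
            have hsegt : segment ℝ q
                (q + q.2.2 • -(((0 : Fin m → ℝ), 0, 1) : (Fin m → ℝ) × ℝ × ℝ)) ⊆ S := by
              intro z hz
              rw [segment_eq_image'] at hz
              obtain ⟨a, ⟨ha0, ha1⟩, rfl⟩ := hz
              show q + a • (q + q.2.2 • -(((0 : Fin m → ℝ), 0, 1) : (Fin m → ℝ) × ℝ × ℝ) - q) ∈ S
              rw [add_sub_cancel_left, smul_smul, smul_neg, ← neg_smul, hcompt]
              refine ⟨hqy, ?_, ?_, ?_⟩
              · show 0 ≤ q.2.2 + -(a * q.2.2)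
                nlinarith [mul_nonneg (by linarith : (0:ℝ) ≤ 1 - a) hqt0]
              · show q.2.2 + -(a * q.2.2) ≤ t
                nlinarith [mul_nonneg ha0 hqt0]
              · show (∑ j, (q.1 j)^2) + q.2.1^2 ≤ R2
                exact hqball
            have hconet := mem_posTangentConeAt_of_segment_subset hsegt
            have hdt := hloc.hasFDerivWithinAt_nonpos
              ((hφdiff q).hasFDerivAt.hasFDerivWithinAt) hconet
            rw [map_smul, map_neg, smul_eq_mul] at hdt
            have hτpos : 0 ≤ pd (((0 : Fin m → ℝ), 0, 1) : (Fin m → ℝ) × ℝ × ℝ) φ q := by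
              change q.2.2 * -(pd (((0 : Fin m → ℝ), 0, 1) : (Fin m → ℝ) × ℝ × ℝ) φ q) ≤ 0 at hdt
              nlinarith
            -- spatial second derivatives are nonpositive at the max
            have hsecond : ∀ v : (Fin m → ℝ) × ℝ × ℝ, v.2.2 = 0 → pd v (pd v φ) q ≤ 0 := by
              intro v hv
              have hq0 : q + (0:ℝ) • v = q := by simp
              have hO : IsOpen {p : (Fin m → ℝ) × ℝ × ℝ |
                  0 < p.2.1 ∧ (∑ j, (p.1 j)^2) + p.2.1^2 < R2} := by
                have hrep : {p : (Fin m → ℝ) × ℝ × ℝ |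
                    0 < p.2.1 ∧ (∑ j, (p.1 j)^2) + p.2.1^2 < R2}
                    = ((fun p : (Fin m → ℝ) × ℝ × ℝ => p.2.1) ⁻¹' Set.Ioi 0)
                      ∩ ((fun p : (Fin m → ℝ) × ℝ × ℝ =>
                          (∑ j, (p.1 j)^2) + p.2.1^2) ⁻¹' Set.Iio R2) := rfl
                rw [hrep]
                refine (isOpen_Ioi.preimage (continuous_fst.comp continuous_snd)).inter
                  (isOpen_Iio.preimage (Continuous.add ?_
                    ((continuous_fst.comp continuous_snd).pow 2)))
                exact continuous_finset_sum _ fun j _ => ((continuous_apply j).comp continuous_fst).pow 2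
              have hlinecont : Continuous (fun s : ℝ => q + s • v) :=
                continuous_const.add (continuous_id.smul continuous_const)
              have hev : ∀ᶠ s in nhds (0:ℝ), q + s • v ∈ {p : (Fin m → ℝ) × ℝ × ℝ |
                  0 < p.2.1 ∧ (∑ j, (p.1 j)^2) + p.2.1^2 < R2} :=
                hlinecont.continuousAt.preimage_mem_nhds
                  (hq0.symm ▸ hO.mem_nhds ⟨hqypos, hball⟩)
              have hlocmax : IsLocalMax (fun s : ℝ => φ (q + s • v)) 0 := by
                filter_upwards [hev] with s hs
                have ht2 : (q + s • v).2.2 = q.2.2 := by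
                  simp [Prod.snd_add, hv]
                have hmemS : q + s • v ∈ S := by
                  refine ⟨hs.1.le, ?_, ?_, hs.2.le⟩
                  · show 0 ≤ (q + s • v).2.2
                    rw [ht2]; exact hqt0
                  · show (q + s • v).2.2 ≤ t
                    rw [ht2]; exact hqtt
                have := hmax _ hmemS
                simpa [hq0] using this
              have hk : ∀ s : ℝ, HasDerivAt (fun r : ℝ => φ (q + r • v)) (pd v φ (q + s • v)) s :=
                fun s => hasDerivAt_line hφdiff q v s
              have hka : HasDerivAt (fun s : ℝ => pd v φ (q + s • v)) (pd v (pd v φ) q) 0 := by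
                have h := hasDerivAt_line ((contDiff_pd v hφsmooth).differentiable (by simp)) q v 0
                rwa [hq0] at h
              exact second_deriv_test hlocmax hk hka
            have hlapφ : lap φ q ≤ 0 := by
              unfold lap
              exact add_nonpos (Finset.sum_nonpos fun i _ => hsecond _ rfl) (hsecond _ rfl)
            have h1 : pd (((0 : Fin m → ℝ), 0, 1) : (Fin m → ℝ) × ℝ × ℝ) φ q
                = 2 * ⟪U q, pd (((0 : Fin m → ℝ), 0, 1) : (Fin m → ℝ) × ℝ × ℝ) U q⟫
                  - δ * (2*(m:ℝ)+3) := by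
              rw [hφdef, pd_phi hsmooth δ _ q, pd_gg hsmooth _ q, pd_QQ_t q]
            have h2 : lap φ q
                = (2 * ((∑ i : Fin m, ⟪pd ((Pi.single i 1, 0, 0) : (Fin m → ℝ) × ℝ × ℝ) U q,
                      pd ((Pi.single i 1, 0, 0) : (Fin m → ℝ) × ℝ × ℝ) U q⟫)
                    + ⟪pd (((0 : Fin m → ℝ), 1, 0) : (Fin m → ℝ) × ℝ × ℝ) U q,
                      pd (((0 : Fin m → ℝ), 1, 0) : (Fin m → ℝ) × ℝ × ℝ) U q⟫)
                  + 2 * ⟪U q, lap U q⟫) - δ * (2*(m:ℝ) + 2) := by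
              rw [hφdef, lap_phi hsmooth δ q, lap_gg hsmooth q, lap_QQ q]
            have hheatq : pd (((0 : Fin m → ℝ), 0, 1) : (Fin m → ℝ) × ℝ × ℝ) U q = lap U q :=
              hheat q.1 q.2.1 q.2.2 hqypos hqtpos
            have hS1 : (0:ℝ) ≤ ∑ i : Fin m,
                ⟪pd ((Pi.single i 1, 0, 0) : (Fin m → ℝ) × ℝ × ℝ) U q,
                  pd ((Pi.single i 1, 0, 0) : (Fin m → ℝ) × ℝ × ℝ) U q⟫ :=
              Finset.sum_nonneg fun i _ => real_inner_self_nonneg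
            have hS2 : (0:ℝ) ≤ ⟪pd (((0 : Fin m → ℝ), 1, 0) : (Fin m → ℝ) × ℝ × ℝ) U q,
                pd (((0 : Fin m → ℝ), 1, 0) : (Fin m → ℝ) × ℝ × ℝ) U q⟫ :=
              real_inner_self_nonneg
            rw [hheatq] at h1
            rw [h1] at hτpos
            rw [h2] at hlapφ
            linarith
    have h7 : φ p0 ≤ 1 := le_trans (hmax p0 hp0S) hφq
    simp only [hφdef] at h7
    show ⟪U p0, U p0⟫ ≤ 1 + δ * QQ m p0
    linarith
  -- conclude
  have hQ0 : 0 ≤ QQ m (x,y,t) := hQnonneg _ (by exact ht.le)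
  have hg1 : ⟪U (x,y,t), U (x,y,t)⟫ ≤ 1 := by
    by_contra hgt
    push_neg at hgt
    set G := ⟪U (x,y,t), U (x,y,t)⟫ with hG
    set Q := QQ m (x,y,t) with hQ
    have hδpos : 0 < (G - 1) / (2*(Q+1)) := div_pos (by linarith) (by linarith)
    have h2 := hkey _ hδpos
    rw [div_mul_eq_mul_div] at h2
    have h3 : G - 1 ≤ (G - 1) * Q / (2*(Q+1)) := by linarith
    have h4 := (le_div_iff₀ (by linarith : (0:ℝ) < 2*(Q+1))).1 h3
    nlinarith
  rw [hgnorm] at hg1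
  nlinarith [norm_nonneg (U (x,y,t))]
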